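/- arXiv:2203.05104 — 2 statements merged into one kernel-verified Lean document; each statement's English description precedes it below -/
import Mathlib

section
/- Let f(θ) = (1/s(m)) Σ_{i=1}^m v_i g_i(w_i) with disjoint parameter blocks, each g_i β-smooth, and v_1,...,v_m i.i.d. standard Gaussian. Then with probability at least 1 - 2·exp(-(1/2)log²m + log m), for every θ with ‖θ-θ_0‖ ≤ R, the quadratic term satisfies |(1/2)(θ-θ_0)^T H(ξ)(θ-θ_0)| ≤ β·R²·log(m)/(2·s(m)). -/
open MeasureTheory ProbabilityTheory RealInnerProductSpace

/-!
The Hessian of `θ ↦ (1 / s) ∑ vᵢ gᵢ(θᵢ)` is block diagonal with blocks `(vᵢ / s) D²gᵢ`, and a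
`β`-Lipschitz gradient bounds `‖D²gᵢ‖ ≤ β`. So when `maxᵢ |vᵢ| ≤ log m` the quadratic form at
`h = θ - θ₀` is at most `(log m / s) β ∑ ‖hᵢ‖² ≤ β R² log m / s`. A standard Gaussian is
sub-Gaussian, so the Chernoff bound gives `P(|vᵢ| > log m) ≤ 2 exp(-log² m / 2)`, and a union
bound over the `m = exp (log m)` weights gives the failure probability.
-/

open Real

lemma hasSubgaussianMGF_id_gaussianReal (v : NNReal) :
    HasSubgaussianMGF id v (gaussianReal 0 v) where
  integrable_exp_mul t := integrable_exp_mul_gaussianReal t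
  mgf_le t := by simp [mgf_id_gaussianReal]

lemma gaussianReal_abs_gt_le (v : NNReal) {t : ℝ} (ht : 0 ≤ t) :
    gaussianReal 0 v {x | t < |x|} ≤ ENNReal.ofReal (2 * exp (-t ^ 2 / (2 * v))) := by
  have h := hasSubgaussianMGF_id_gaussianReal v
  have hsub : {x : ℝ | t < |x|} ⊆ {x | t ≤ id x} ∪ {x | t ≤ (-id) x} := fun x (hx : t < |x|) => by
    rcases lt_abs.mp hx with hx | hx
    exacts [Or.inl hx.le, Or.inr hx.le]
  calc gaussianReal 0 v {x | t < |x|}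
      ≤ gaussianReal 0 v {x | t ≤ id x} + gaussianReal 0 v {x | t ≤ (-id) x} :=
        (measure_mono hsub).trans (measure_union_le _ _)
    _ ≤ ENNReal.ofReal (exp (-t ^ 2 / (2 * v))) + ENNReal.ofReal (exp (-t ^ 2 / (2 * v))) := by
        rw [← ofReal_measureReal, ← ofReal_measureReal]
        gcongr
        exacts [h.measure_ge_le ht, h.neg.measure_ge_le ht]
    _ = ENNReal.ofReal (2 * exp (-t ^ 2 / (2 * v))) := by
        rw [← ENNReal.ofReal_add (by positivity) (by positivity), ← two_mul]

lemma measure_pi_exists_mem_le {ι α : Type*} [Fintype ι] [MeasurableSpace α] (μ : Measure α)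
    [IsProbabilityMeasure μ] {A : Set α} (hA : MeasurableSet A) :
    Measure.pi (fun _ : ι => μ) {v | ∃ i, v i ∈ A} ≤ Fintype.card ι * μ A := by
  calc Measure.pi (fun _ : ι => μ) {v | ∃ i, v i ∈ A}
      = Measure.pi (fun _ : ι => μ) (⋃ i, Function.eval i ⁻¹' A) := by
        congr 1; ext; simp
    _ ≤ ∑ i, Measure.pi (fun _ : ι => μ) (Function.eval i ⁻¹' A) := measure_iUnion_fintype_le _ _
    _ = ∑ _i : ι, μ A := by
        congr with i
        exact (measurePreserving_eval _ i).measure_preimage hA.nullMeasurableSet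
    _ = Fintype.card ι * μ A := by simp

lemma measure_pi_gaussianReal_exists_abs_gt_le {ι : Type*} [Fintype ι] {t : ℝ} (ht : 0 ≤ t) :
    Measure.pi (fun _ : ι => gaussianReal 0 1) {v | ∃ i, t < |v i|} ≤
      ENNReal.ofReal (Fintype.card ι * (2 * exp (-t ^ 2 / 2))) := by
  calc Measure.pi (fun _ : ι => gaussianReal 0 1) {v | ∃ i, t < |v i|}
      ≤ Fintype.card ι * gaussianReal 0 1 {x | t < |x|} :=
        measure_pi_exists_mem_le _ (measurableSet_lt measurable_const measurable_id.abs)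
    _ ≤ ENNReal.ofReal (Fintype.card ι) *
          ENNReal.ofReal (2 * exp (-t ^ 2 / (2 * (1 : NNReal)))) := by
        rw [ENNReal.ofReal_natCast]
        gcongr
        exact gaussianReal_abs_gt_le 1 ht
    _ = ENNReal.ofReal (Fintype.card ι * (2 * exp (-t ^ 2 / 2))) := by
        rw [← ENNReal.ofReal_mul (by positivity)]
        norm_num

lemma ofReal_one_sub_le_measure {α : Type*} [MeasurableSpace α] {μ : Measure α}
    [IsProbabilityMeasure μ] {s : Set α} {ε : ℝ} (hε : 0 ≤ ε) (h : μ sᶜ ≤ ENNReal.ofReal ε) :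
    ENNReal.ofReal (1 - ε) ≤ μ s := by
  rw [ENNReal.ofReal_sub _ hε, ENNReal.ofReal_one, tsub_le_iff_right]
  calc (1 : ENNReal) = μ Set.univ := measure_univ.symm
    _ ≤ μ s + μ sᶜ := measure_univ_le_add_compl s
    _ ≤ μ s + ENNReal.ofReal ε := by gcongr

section Hessian

variable {𝕜 : Type*} [NontriviallyNormedField 𝕜]
  {E : Type*} [NormedAddCommGroup E] [NormedSpace 𝕜 E]
  {F : Type*} [NormedAddCommGroup F] [NormedSpace 𝕜 F]

lemma norm_iteratedFDeriv_two_le_of_lipschitz_fderiv {g : E → F} {β : ℝ} (hβ : 0 ≤ β)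
    (hg : ContDiff 𝕜 2 g) (hlip : ∀ w w', ‖fderiv 𝕜 g w - fderiv 𝕜 g w'‖ ≤ β * ‖w - w'‖)
    (w : E) : ‖iteratedFDeriv 𝕜 2 g w‖ ≤ β := by
  rw [← norm_iteratedFDeriv_fderiv, norm_iteratedFDeriv_one]
  have hdiff : Differentiable 𝕜 (fderiv 𝕜 g) :=
    (hg.fderiv_right (by norm_num)).differentiable one_ne_zero
  exact (hdiff w).hasFDerivAt.le_of_lip' hβ (.of_forall fun x => hlip x w)

end Hessian

section Blocks

variable {ι : Type*} [Fintype ι] {E : ι → Type*} [∀ i, NormedAddCommGroup (E i)]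
  [∀ i, NormedSpace ℝ (E i)] {q : ENNReal} [Fact (1 ≤ q)] {n : ℕ}

lemma iteratedFDeriv_comp_piLp_apply {F : Type*} [NormedAddCommGroup F] [NormedSpace ℝ F]
    (i : ι) {g : E i → F} (hg : ContDiff ℝ n g) (ξ : PiLp q E) (y : Fin n → PiLp q E) :
    iteratedFDeriv ℝ n (fun θ : PiLp q E => g (θ i)) ξ y =
      iteratedFDeriv ℝ n g (ξ i) (fun k => y k i) :=
  congrArg (· y) ((PiLp.proj (𝕜 := ℝ) q E i).iteratedFDeriv_comp_right hg ξ le_rfl)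

lemma iteratedFDeriv_weighted_sum_piLp_apply (c : ℝ) (v : ι → ℝ) {g : ∀ i, E i → ℝ}
    (hg : ∀ i, ContDiff ℝ n (g i)) (ξ : PiLp q E) (y : Fin n → PiLp q E) :
    iteratedFDeriv ℝ n (fun θ : PiLp q E => c * ∑ i, v i * g i (θ i)) ξ y =
      c * ∑ i, v i * iteratedFDeriv ℝ n (g i) (ξ i) (fun k => y k i) := by
  have hblock : ∀ i, ContDiff ℝ n (fun θ : PiLp q E => g i (θ i)) := fun i =>
    (hg i).comp (PiLp.proj (𝕜 := ℝ) q E i).contDiff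
  have hsum : ContDiff ℝ n (fun θ : PiLp q E => ∑ i, v i • g i (θ i)) :=
    ContDiff.sum fun i _ => (hblock i).const_smul (v i)
  change iteratedFDeriv ℝ n (fun θ : PiLp q E => c • ∑ i, v i • g i (θ i)) ξ y = _
  rw [iteratedFDeriv_const_smul_apply' hsum.contDiffAt,
    iteratedFDeriv_fun_sum_apply fun i _ => ((hblock i).const_smul (v i)).contDiffAt,
    smul_apply, sum_apply, smul_eq_mul]
  congr 1
  refine Finset.sum_congr rfl fun i _ => ?_
  rw [iteratedFDeriv_const_smul_apply' (hblock i).contDiffAt, smul_apply, smul_eq_mul,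
    iteratedFDeriv_comp_piLp_apply i (hg i)]

lemma abs_sum_mul_iteratedFDeriv_two_le {g : ∀ i, E i → ℝ} {β L : ℝ} (hβ : 0 ≤ β)
    (hg : ∀ i, ContDiff ℝ 2 (g i)) (hlip : ∀ i w w', ‖fderiv ℝ (g i) w - fderiv ℝ (g i) w'‖ ≤ β * ‖w - w'‖)
    {v : ι → ℝ} (hv : ∀ i, |v i| ≤ L) (ξ h : PiLp 2 E) :
    |∑ i, v i * iteratedFDeriv ℝ 2 (g i) (ξ i) (fun k => ![h, h] k i)| ≤ L * β * ‖h‖ ^ 2 := by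
  have hterm : ∀ i, |v i * iteratedFDeriv ℝ 2 (g i) (ξ i) (fun k => ![h, h] k i)| ≤
      L * (β * ‖h i‖ ^ 2) := fun i => by
    have hhess : |iteratedFDeriv ℝ 2 (g i) (ξ i) (fun k => ![h, h] k i)| ≤ β * ‖h i‖ ^ 2 :=
      calc |iteratedFDeriv ℝ 2 (g i) (ξ i) (fun k => ![h, h] k i)|
          ≤ ‖iteratedFDeriv ℝ 2 (g i) (ξ i)‖ * ∏ k, ‖![h, h] k i‖ :=
            (iteratedFDeriv ℝ 2 (g i) (ξ i)).le_opNorm _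
        _ ≤ β * ‖h i‖ ^ 2 := by
            simp only [Fin.prod_univ_two, Matrix.cons_val_zero, Matrix.cons_val_one, ← sq]
            gcongr
            exact norm_iteratedFDeriv_two_le_of_lipschitz_fderiv hβ (hg i) (hlip i) (ξ i)
    rw [abs_mul]
    exact mul_le_mul (hv i) hhess (abs_nonneg _) ((abs_nonneg _).trans (hv i))
  calc |∑ i, v i * iteratedFDeriv ℝ 2 (g i) (ξ i) (fun k => ![h, h] k i)|
      ≤ ∑ i, L * (β * ‖h i‖ ^ 2) :=
        (Finset.abs_sum_le_sum_abs _ _).trans (Finset.sum_le_sum fun i _ => hterm i)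
    _ = L * β * ‖h‖ ^ 2 := by
        rw [PiLp.norm_sq_eq_of_L2, ← Finset.mul_sum, ← Finset.mul_sum, mul_assoc]

end Blocks

theorem stmt3_general (m : ℕ) (p : Fin m → ℕ) (s β R : ℝ) (hs : 0 < s) (hβ : 0 ≤ β)
    (g : ∀ i : Fin m, EuclideanSpace ℝ (Fin (p i)) → ℝ)
    (hg : ∀ i, ContDiff ℝ 2 (g i))
    (hsmooth : ∀ i w w', ‖fderiv ℝ (g i) w - fderiv ℝ (g i) w'‖ ≤ β * ‖w - w'‖)
    (F : (Fin m → ℝ) → PiLp 2 (fun i => EuclideanSpace ℝ (Fin (p i))) → ℝ)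
    (hF : ∀ v θ, F v θ = (1 / s) * ∑ i, v i * g i (θ i)) :
    ENNReal.ofReal (1 - 2 * Real.exp (-(1 / 2) * Real.log m ^ 2 + Real.log m)) ≤
      Measure.pi (fun _ : Fin m => gaussianReal 0 1)
        {v | ∀ θ θ₀ ξ : PiLp 2 (fun i => EuclideanSpace ℝ (Fin (p i))), ‖θ - θ₀‖ ≤ R →
          |(1 / 2 : ℝ) * iteratedFDeriv ℝ 2 (F v) ξ ![θ - θ₀, θ - θ₀]| ≤
            β * R ^ 2 * Real.log m / (2 * s)} := by
  set L := Real.log m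
  have hL : 0 ≤ L := Real.log_natCast_nonneg m
  refine (ofReal_one_sub_le_measure (s := {v | ∀ i, |v i| ≤ L}) (by positivity) ?_).trans
    (measure_mono fun v hv θ θ₀ ξ hθ => ?_)
  · calc Measure.pi (fun _ : Fin m => gaussianReal 0 1) {v | ∀ i, |v i| ≤ L}ᶜ
        = Measure.pi (fun _ : Fin m => gaussianReal 0 1) {v | ∃ i, L < |v i|} := by
          congr 1; ext; simp
      _ ≤ ENNReal.ofReal (m * (2 * exp (-L ^ 2 / 2))) := by
          simpa using measure_pi_gaussianReal_exists_abs_gt_le (ι := Fin m) hL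
      _ ≤ ENNReal.ofReal (2 * exp (-(1 / 2) * L ^ 2 + L)) := by
          refine ENNReal.ofReal_le_ofReal ?_
          -- `m ≤ exp (log m)` also holds for `m = 0`, where `log 0 = 0`
          calc (m : ℝ) * (2 * exp (-L ^ 2 / 2)) ≤ exp L * (2 * exp (-L ^ 2 / 2)) := by
                gcongr; exact le_exp_log _
            _ = 2 * exp (-(1 / 2) * L ^ 2 + L) := by rw [exp_add]; ring_nf
  · rw [funext (hF v), iteratedFDeriv_weighted_sum_piLp_apply _ _ hg]
    have hquad := abs_sum_mul_iteratedFDeriv_two_le hβ hg hsmooth hv ξ (θ - θ₀)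
    have hh : ‖θ - θ₀‖ ^ 2 ≤ R ^ 2 := pow_le_pow_left₀ (norm_nonneg _) hθ 2
    rw [abs_mul, abs_mul, abs_of_pos (by positivity : (0 : ℝ) < 1 / 2),
      abs_of_pos (by positivity : 0 < 1 / s)]
    calc 1 / 2 * (1 / s * |∑ i, _|) ≤ 1 / 2 * (1 / s * (L * β * R ^ 2)) := by
          gcongr; exact hquad.trans (by gcongr)
      _ = β * R ^ 2 * L / (2 * s) := by field_simp

/-- Assembly model with disjoint parameter blocks and i.i.d. standard Gaussian weights:
with probability at least `1 - 2 exp(-(1/2) log² m + log m)` over the weights, the quadratic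
Taylor remainder is bounded by `β R² log m / (2 s m)` on every `R`-ball. -/
theorem stmt3 (m : ℕ) (p : Fin m → ℕ) (s β R : ℝ) (hs : 0 < s) (hβ : 0 ≤ β) (hR : 0 ≤ R)
    (g : ∀ i : Fin m, EuclideanSpace ℝ (Fin (p i)) → ℝ)
    (hg : ∀ i, ContDiff ℝ 2 (g i))
    (hsmooth : ∀ i w w', ‖fderiv ℝ (g i) w - fderiv ℝ (g i) w'‖ ≤ β * ‖w - w'‖)
    (F : (Fin m → ℝ) → PiLp 2 (fun i => EuclideanSpace ℝ (Fin (p i))) → ℝ)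
    (hF : ∀ v θ, F v θ = (1 / s) * ∑ i, v i * g i (θ i)) :
    ENNReal.ofReal (1 - 2 * Real.exp (-(1 / 2) * Real.log m ^ 2 + Real.log m)) ≤
      Measure.pi (fun _ : Fin m => gaussianReal 0 1)
        {v | ∀ θ θ₀ ξ : PiLp 2 (fun i => EuclideanSpace ℝ (Fin (p i))), ‖θ - θ₀‖ ≤ R →
          |(1 / 2 : ℝ) * iteratedFDeriv ℝ 2 (F v) ξ ![θ - θ₀, θ - θ₀]| ≤
            β * R ^ 2 * Real.log m / (2 * s)} :=
  stmt3_general m p s β R hs hβ g hg hsmooth F hF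
end

section
/- Let n_1, ..., n_m ∈ ℝ^p be pairwise orthogonal unit vectors and let g_i(θ) = φ_i(n_i^T θ) with each φ_i twice differentiable and |φ_i''| ≤ β. Define f(θ) = (1/√m) Σ_{i=1}^m w_i g_i(θ) with weights satisfying |w_i| ≤ W for all i. Then for any θ, θ_0 with ‖θ - θ_0‖ ≤ R and any ξ, the quadratic term satisfies |(1/2)(θ-θ_0)^T H_f(ξ)(θ-θ_0)| ≤ β·W·R²/(2√m). -/
/-!
Each summand `θ ↦ φᵢ ⟪nᵢ, θ⟫` is a ridge function, whose Hessian at `ξ` is the rank-one form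
`φᵢ''(⟪nᵢ, ξ⟫) nᵢ nᵢᵀ`. Hence the quadratic form of `H_f(ξ)` at `v` is
`(1/√m) ∑ᵢ wᵢ φᵢ''(⟪nᵢ, ξ⟫) ⟪nᵢ, v⟫²`, whose coefficients are bounded by `W β`, and Bessel's
inequality `∑ᵢ ⟪nᵢ, v⟫² ≤ ‖v‖²` for the orthonormal family `nᵢ` finishes the estimate.
-/

open RealInnerProductSpace

variable {E : Type*} [NormedAddCommGroup E] [InnerProductSpace ℝ E]

lemma iteratedFDeriv_two_ridge_apply (u : E) {φ : ℝ → ℝ} (hφ : ContDiff ℝ 2 φ) (ξ v : E) :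
    iteratedFDeriv ℝ 2 (fun θ => φ ⟪u, θ⟫) ξ ![v, v] = deriv (deriv φ) ⟪u, ξ⟫ * ⟪u, v⟫ ^ 2 := by
  change iteratedFDeriv ℝ 2 (φ ∘ innerSL ℝ u) ξ ![v, v] = _
  rw [(innerSL ℝ u).iteratedFDeriv_comp_right hφ ξ le_rfl,
    ContinuousMultilinearMap.compContinuousLinearMap_apply,
    iteratedFDeriv_apply_eq_iteratedDeriv_mul_prod]
  simp [iteratedDeriv_succ, Fin.prod_univ_two, sq, mul_comm]

lemma iteratedFDeriv_two_weighted_sum_ridge_apply {ι : Type*} [Fintype ι] (c : ℝ) (w : ι → ℝ)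
    (u : ι → E) {φ : ι → ℝ → ℝ} (hφ : ∀ i, ContDiff ℝ 2 (φ i)) (ξ v : E) :
    iteratedFDeriv ℝ 2 (fun θ => c * ∑ i, w i * φ i ⟪u i, θ⟫) ξ ![v, v] =
      c * ∑ i, w i * deriv (deriv (φ i)) ⟪u i, ξ⟫ * ⟪u i, v⟫ ^ 2 := by
  have hridge : ∀ i, ContDiff ℝ 2 (fun θ => φ i ⟪u i, θ⟫) := fun i =>
    (hφ i).comp (innerSL ℝ (u i)).contDiff
  have hsummand : ∀ i, ContDiff ℝ 2 (fun θ => w i * φ i ⟪u i, θ⟫) := fun i =>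
    contDiff_const.mul (hridge i)
  simp only [← smul_eq_mul (a := c)]
  rw [iteratedFDeriv_const_smul_apply' (ContDiff.sum fun i _ => hsummand i).contDiffAt,
    iteratedFDeriv_sum fun i _ => hsummand i, smul_apply,
    Finset.sum_apply, sum_apply, smul_eq_mul]
  refine congrArg (c * ·) (Finset.sum_congr rfl fun i _ => ?_)
  change iteratedFDeriv ℝ 2 (fun θ => w i • φ i ⟪u i, θ⟫) ξ ![v, v] = _
  rw [iteratedFDeriv_const_smul_apply' (hridge i).contDiffAt, smul_apply,
    iteratedFDeriv_two_ridge_apply _ (hφ i), smul_eq_mul, mul_assoc]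

lemma Orthonormal.abs_sum_mul_inner_sq_le {ι : Type*} [Fintype ι] {u : ι → E}
    (hu : Orthonormal ℝ u) {a : ι → ℝ} {B : ℝ} (hB : 0 ≤ B) (ha : ∀ i, |a i| ≤ B) (v : E) :
    |∑ i, a i * ⟪u i, v⟫ ^ 2| ≤ B * ‖v‖ ^ 2 := by
  have hbessel : ∑ i, ⟪u i, v⟫ ^ 2 ≤ ‖v‖ ^ 2 := by
    simpa [Real.norm_eq_abs, sq_abs] using hu.sum_inner_products_le (s := Finset.univ) v
  calc |∑ i, a i * ⟪u i, v⟫ ^ 2|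
      ≤ ∑ i, |a i| * ⟪u i, v⟫ ^ 2 :=
        (Finset.abs_sum_le_sum_abs _ _).trans_eq (by simp only [abs_mul, abs_pow, sq_abs])
    _ ≤ ∑ i, B * ⟪u i, v⟫ ^ 2 :=
        Finset.sum_le_sum fun i _ => mul_le_mul_of_nonneg_right (ha i) (sq_nonneg _)
    _ ≤ B * ‖v‖ ^ 2 := by rw [← Finset.mul_sum]; gcongr

theorem stmt6_general (p m : ℕ) (β W R : ℝ) (hβ : 0 ≤ β) (hW : 0 ≤ W)
    (n : Fin m → EuclideanSpace ℝ (Fin p)) (hunit : ∀ i, ‖n i‖ = 1)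
    (horth : ∀ i j, i ≠ j → ⟪n i, n j⟫ = 0)
    (φ : Fin m → ℝ → ℝ) (hφ : ∀ i, ContDiff ℝ 2 (φ i))
    (hβφ : ∀ i t, |deriv (deriv (φ i)) t| ≤ β)
    (w : Fin m → ℝ) (hw : ∀ i, |w i| ≤ W)
    (f : EuclideanSpace ℝ (Fin p) → ℝ)
    (hf : ∀ θ, f θ = (1 / Real.sqrt m) * ∑ i, w i * φ i (⟪n i, θ⟫))
    (θ θ₀ ξ : EuclideanSpace ℝ (Fin p)) (hθ : ‖θ - θ₀‖ ≤ R) :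
    |(1 / 2 : ℝ) * iteratedFDeriv ℝ 2 f ξ ![θ - θ₀, θ - θ₀]| ≤
      β * W * R ^ 2 / (2 * Real.sqrt m) := by
  have hn : Orthonormal ℝ n := ⟨hunit, fun i j => horth i j⟩
  have hcoeff : ∀ i, |w i * deriv (deriv (φ i)) ⟪n i, ξ⟫| ≤ W * β := fun i => by
    rw [abs_mul]; exact mul_le_mul (hw i) (hβφ i _) (abs_nonneg _) hW
  have hquad := hn.abs_sum_mul_inner_sq_le (mul_nonneg hW hβ) hcoeff (θ - θ₀)
  rw [funext hf, iteratedFDeriv_two_weighted_sum_ridge_apply _ _ _ hφ, abs_mul, abs_mul,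
    abs_of_nonneg (by positivity : (0 : ℝ) ≤ 1 / 2),
    abs_of_nonneg (by positivity : 0 ≤ 1 / Real.sqrt m)]
  calc 1 / 2 * (1 / Real.sqrt m * |∑ i, w i * deriv (deriv (φ i)) ⟪n i, ξ⟫ * ⟪n i, θ - θ₀⟫ ^ 2|)
      ≤ 1 / 2 * (1 / Real.sqrt m * (W * β * R ^ 2)) := by
        gcongr
        exact hquad.trans (by gcongr)
    _ = β * W * R ^ 2 / (2 * Real.sqrt m) := by ring

/-- Assembling rank-one sub-models with pairwise orthogonal unit normals and bounded
weights: the quadratic Taylor remainder is bounded by `β W R² / (2 √m)`. -/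
theorem stmt6 (p m : ℕ) (β W R : ℝ) (hβ : 0 ≤ β) (hW : 0 ≤ W) (hR : 0 ≤ R)
    (n : Fin m → EuclideanSpace ℝ (Fin p)) (hunit : ∀ i, ‖n i‖ = 1)
    (horth : ∀ i j, i ≠ j → ⟪n i, n j⟫ = 0)
    (φ : Fin m → ℝ → ℝ) (hφ : ∀ i, ContDiff ℝ 2 (φ i))
    (hβφ : ∀ i t, |deriv (deriv (φ i)) t| ≤ β)
    (w : Fin m → ℝ) (hw : ∀ i, |w i| ≤ W)
    (f : EuclideanSpace ℝ (Fin p) → ℝ)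
    (hf : ∀ θ, f θ = (1 / Real.sqrt m) * ∑ i, w i * φ i (⟪n i, θ⟫))
    (θ θ₀ ξ : EuclideanSpace ℝ (Fin p)) (hθ : ‖θ - θ₀‖ ≤ R) :
    |(1 / 2 : ℝ) * iteratedFDeriv ℝ 2 f ξ ![θ - θ₀, θ - θ₀]| ≤
      β * W * R ^ 2 / (2 * Real.sqrt m) :=
  stmt6_general p m β W R hβ hW n hunit horth φ hφ hβφ w hw f hf θ θ₀ ξ hθ
end
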